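/- arXiv:2102.11899 — 3 statements merged into one kernel-verified Lean document; each statement's English description precedes it below -/
import Mathlib

section
/- Let Q be a transfer operator and let d ≥ 2 and q ≥ 2 be integers. Regard S_q as a map on the open set of vectors in ℝ^q with strictly positive entries. Then for every v ∈ ℝ^q with ∑_i v_i = 0, the Fréchet derivative of S_q at the barycenter eq satisfies D S_q[eq](v) = (d/Q̂(0))·Q^q v. -/
open scoped BigOperators

/-- Fourier transform of a transfer operator `Q : ℤ → ℝ`. -/
noncomputable def fourierTransform (Q : ℤ → ℝ) (k : ℝ) : ℝ :=
  ∑' n : ℤ, Q n * Real.cos (n * k)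

/-- The mod-`q` fuzzy transfer operator, a `q × q` circulant matrix. -/
noncomputable def fuzzyOp (Q : ℤ → ℝ) (q : ℕ) : Matrix (Fin q) (Fin q) ℝ :=
  fun r s => ∑' m : ℤ, Q ((r : ℤ) - (s : ℤ) + q * m)

/-- The map `S_q(u) = Q^q u^{⊙d} / (Q̂(0) · ‖u^{⊙d}‖₁)`. -/
noncomputable def Smap (Q : ℤ → ℝ) (q d : ℕ) (u : Fin q → ℝ) : Fin q → ℝ :=
  fun i => (fuzzyOp Q q).mulVec (fun j => u j ^ d) i /
    (fourierTransform Q 0 * ∑ j, |u j ^ d|)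

/-- The barycenter `eq = (1/q, …, 1/q)` of the unit simplex. -/
noncomputable def barycenter (q : ℕ) : Fin q → ℝ := fun _ => 1 / (q : ℝ)

/-!
Near the barycenter all entries are positive, so the absolute values in `‖u^{⊙d}‖₁` can be
dropped and `S_q` is the smooth map `u ↦ (Q̂(0) ∑ⱼ uⱼ^d)⁻¹ • Q^q u^{⊙d}`. At a constant vector
`(a, …, a)` the derivative of `u ↦ u^{⊙d}` is `d a^{d-1}` times the identity, so in a direction
`v` with `∑ v = 0` the derivative of the denominator vanishes and only the numerator
contributes: `d a^{d-1} / (Q̂(0) q a^d) • Q^q v`, which is `d / Q̂(0) • Q^q v` at `a = 1/q`.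
-/

open Filter Topology Matrix

section NormalizedPow

variable {ι : Type*} [Fintype ι]

noncomputable def normalizedPow (A : Matrix ι ι ℝ) (c : ℝ) (d : ℕ) (u : ι → ℝ) : ι → ℝ :=
  (c * ∑ j, u j ^ d)⁻¹ • A *ᵥ fun j => u j ^ d

theorem hasFDerivAt_pow_apply_const (d : ℕ) (a : ℝ) :
    HasFDerivAt (fun (u : ι → ℝ) j => u j ^ d)
      (((d : ℝ) * a ^ (d - 1)) • ContinuousLinearMap.id ℝ (ι → ℝ)) (fun _ => a) :=
  hasFDerivAt_pi'.2 fun j => by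
    have hj : HasFDerivAt (fun u : ι → ℝ => u j) (ContinuousLinearMap.proj (R := ℝ) j)
        (fun _ => a) := hasFDerivAt_apply j _
    simpa using hj.pow d

theorem fderiv_normalizedPow_const_of_sum_eq_zero [Nonempty ι] (A : Matrix ι ι ℝ) {c : ℝ}
    (hc : c ≠ 0) (d : ℕ) {a : ℝ} (ha : a ≠ 0) {v : ι → ℝ} (hv : ∑ i, v i = 0) :
    fderiv ℝ (normalizedPow A c d) (fun _ => a) v
      = ((d : ℝ) / (c * Fintype.card ι * a)) • A *ᵥ v := by
  have hP := hasFDerivAt_pow_apply_const (ι := ι) d a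
  have hdenom_ne : c * ∑ _j : ι, a ^ d ≠ 0 := by simp [hc, ha]
  have hnum := (mulVecLin A).toContinuousLinearMap.hasFDerivAt.comp _ hP
  have hdenom :=
    (HasFDerivAt.fun_sum (u := Finset.univ) fun j _ => hasFDerivAt_pi'.1 hP j).const_mul c
  have hinv := (hasDerivAt_inv (by simpa using hdenom_ne)).comp_hasFDerivAt _ hdenom
  have hG : HasFDerivAt (normalizedPow A c d) _ _ := hinv.fun_smul hnum
  rw [hG.fderiv]
  simp only [Function.comp_apply, Finset.sum_const, Finset.card_univ, nsmul_eq_mul,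
    _root_.mul_inv_rev, ContinuousLinearMap.comp_smulₛₗ, Real.ringHom_apply,
    ContinuousLinearMap.comp_id, neg_smul, _root_.add_apply, _root_.smul_apply,
    LinearMap.coe_toContinuousLinearMap', mulVecBilin_apply, ContinuousLinearMap.smulRight_apply,
    _root_.neg_apply, _root_.sum_apply, ContinuousLinearMap.proj_apply, smul_eq_mul,
    ← Finset.mul_sum, hv, mul_zero, neg_zero, zero_smul, add_zero]
  rw [smul_smul]
  congr 1
  rcases d with _ | d
  · simp
  · rw [pow_succ]
    field_simp
    simp

end NormalizedPow

theorem fourierTransform_zero (Q : ℤ → ℝ) : fourierTransform Q 0 = ∑' n, Q n := by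
  simp [fourierTransform]

theorem fourierTransform_zero_pos {Q : ℤ → ℝ} (hpos : ∀ n, 0 < Q n) (hsum : Summable Q) :
    0 < fourierTransform Q 0 := by
  rw [fourierTransform_zero]
  exact hsum.tsum_pos (fun n => (hpos n).le) 0 (hpos 0)

theorem Smap_eventuallyEq_normalizedPow (Q : ℤ → ℝ) (q d : ℕ) {x : Fin q → ℝ}
    (hx : ∀ j, 0 < x j) :
    Smap Q q d =ᶠ[𝓝 x] normalizedPow (fuzzyOp Q q) (fourierTransform Q 0) d := by
  have hpos : ∀ᶠ u in 𝓝 x, ∀ j, 0 < u j :=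
    eventually_all.2 fun j => (continuous_apply j).continuousAt.eventually (lt_mem_nhds (hx j))
  filter_upwards [hpos] with u hu
  ext i
  simp only [Smap, normalizedPow, fun j => abs_of_pos (pow_pos (hu j) d), Pi.smul_apply,
    smul_eq_mul]
  ring

theorem stmt1_general (Q : ℤ → ℝ) (hpos : ∀ n : ℤ, 0 < Q n)
    (hsum : Summable Q) (d q : ℕ) (hq : 2 ≤ q) :
    ∀ v : Fin q → ℝ, ∑ i, v i = 0 →
      fderiv ℝ (Smap Q q d) (barycenter q) v
        = ((d : ℝ) / fourierTransform Q 0) • (fuzzyOp Q q).mulVec v := by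
  intro v hv
  unfold barycenter
  have hq0 : (0 : ℝ) < q := by norm_cast; omega
  have : Nonempty (Fin q) := ⟨⟨0, by omega⟩⟩
  have hc := (fourierTransform_zero_pos hpos hsum).ne'
  rw [(Smap_eventuallyEq_normalizedPow Q q d fun _ => by simp [hq0]).fderiv_eq,
    fderiv_normalizedPow_const_of_sum_eq_zero _ hc d (by positivity) hv,
    Fintype.card_fin]
  field_simp

theorem stmt1 (Q : ℤ → ℝ) (hpos : ∀ n : ℤ, 0 < Q n) (hsymm : ∀ n : ℤ, Q (-n) = Q n)
    (hsum : Summable Q) (d q : ℕ) (hd : 2 ≤ d) (hq : 2 ≤ q) :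
    ∀ v : Fin q → ℝ, ∑ i, v i = 0 →
      fderiv ℝ (Smap Q q d) (barycenter q) v
        = ((d : ℝ) / fourierTransform Q 0) • (fuzzyOp Q q).mulVec v :=
  stmt1_general Q hpos hsum d q hq
end

section
/- Let d ≥ 2 be an integer and β > 0. Then the inequality d·Q̂_{SOS,β}(k) > Q̂_{SOS,β}(0) holds for all k ∈ [0, π] if and only if cosh β > (d+1)/(d−1), i.e. if and only if β > arcosh((d+1)/(d−1)), where Q̂_{SOS,β}(k) = ∑_{n∈ℤ} exp(−β|n|)·cos(n·k). -/
/-- Fourier transform of the SOS transfer operator at inverse temperature `β`. -/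
noncomputable def sosFourier (β k : ℝ) : ℝ :=
  ∑' n : ℤ, Real.exp (-β * |(n : ℝ)|) * Real.cos (n * k)

/-- The inverse hyperbolic cosine `arcosh x = log (x + √(x² − 1))` (for `x ≥ 1`). -/
noncomputable def arcosh (x : ℝ) : ℝ := Real.log (x + Real.sqrt (x ^ 2 - 1))

/-!
Summing two geometric series in `r e^{ik}`, `r = e^{-β}`, shows that `Q̂_{SOS,β}` is the
Poisson kernel `sinh β / (cosh β - cos k)`. So `d Q̂(k) > Q̂(0)` says
`cosh β - cos k < d (cosh β - 1)`, which is hardest at `k = π`, where it reads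
`cosh β > (d + 1) / (d - 1)`; and `arcosh` is the increasing inverse of `cosh` on `[0, ∞)`.
-/

open Real (cos cosh sinh exp)

lemma one_sub_two_mul_cos_add_sq_pos {r : ℝ} (hr0 : 0 ≤ r) (hr1 : r < 1) (k : ℝ) :
    0 < 1 - 2 * r * cos k + r ^ 2 := by
  nlinarith [Real.cos_le_one k, sq_pos_of_pos (sub_pos.mpr hr1)]

theorem hasSum_pow_natAbs_mul_cos {r : ℝ} (hr0 : 0 ≤ r) (hr1 : r < 1) (k : ℝ) :
    HasSum (fun n : ℤ => r ^ n.natAbs * cos (n * k))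
      ((1 - r ^ 2) / (1 - 2 * r * cos k + r ^ 2)) := by
  set z : ℂ := r * Complex.exp (k * Complex.I)
  have hz : ‖z‖ < 1 := by
    simpa [z, Complex.norm_exp_ofReal_mul_I, abs_of_nonneg hr0] using hr1
  have hpow (n : ℕ) : (z ^ n).re = r ^ n * cos (n * k) := by
    rw [mul_pow, ← Complex.ofReal_pow, ← Complex.exp_nat_mul, ← mul_assoc,
      ← Complex.ofReal_natCast, ← Complex.ofReal_mul, Complex.re_ofReal_mul,
      Complex.exp_ofReal_mul_I_re]
  have hnat : HasSum (fun n : ℕ => r ^ n * cos (n * k)) ((1 - z)⁻¹).re := by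
    simpa only [hpow] using Complex.hasSum_re (hasSum_geometric_of_norm_lt_one hz)
  have hshift : HasSum (fun n : ℕ => r ^ (n + 1) * cos ((n + 1 : ℕ) * k))
      (((1 - z)⁻¹).re - 1) := by
    simpa using (hasSum_nat_add_iff' 1).mpr hnat
  have hneg : HasSum
      (fun n : ℕ => r ^ (-(n + 1 : ℤ)).natAbs * cos (((-(n + 1 : ℤ) : ℤ) : ℝ) * k))
      (((1 - z)⁻¹).re - 1) := by
    refine hshift.congr_fun fun n => ?_
    rw [Int.natAbs_neg, Int.cast_neg, neg_mul, Real.cos_neg]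
    norm_cast
  have hre : ((1 - z)⁻¹).re = (1 - r * cos k) / (1 - 2 * r * cos k + r ^ 2) := by
    rw [Complex.inv_re, Complex.normSq_apply]
    simp only [z, Complex.sub_re, Complex.sub_im, Complex.one_re, Complex.one_im,
      Complex.re_ofReal_mul, Complex.im_ofReal_mul, Complex.exp_ofReal_mul_I_re,
      Complex.exp_ofReal_mul_I_im]
    congr 1
    linear_combination r ^ 2 * Real.sin_sq_add_cos_sq k
  have hint := HasSum.of_nat_of_neg_add_one (f := fun n : ℤ => r ^ n.natAbs * cos (n * k))
    (by simpa only [Int.cast_natCast, Int.natAbs_natCast] using hnat) hneg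
  convert hint using 1
  have hD := one_sub_two_mul_cos_add_sq_pos hr0 hr1 k
  rw [hre, div_sub_one hD.ne', ← add_div, div_left_inj' hD.ne']
  ring

theorem sosFourier_eq {β : ℝ} (hβ : 0 < β) (k : ℝ) :
    sosFourier β k = sinh β / (cosh β - cos k) := by
  set r := exp (-β)
  have hr1 : r < 1 := Real.exp_lt_one_iff.mpr (neg_neg_of_pos hβ)
  have hterm : (fun n : ℤ => exp (-β * |(n : ℝ)|) * cos (n * k)) =
      fun n : ℤ => r ^ n.natAbs * cos (n * k) := by
    funext n
    rw [← Real.exp_nat_mul, Nat.cast_natAbs, Int.cast_abs, mul_comm (-β)]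
  have hD := one_sub_two_mul_cos_add_sq_pos (Real.exp_pos (-β)).le hr1 k
  have hk : 0 < cosh β - cos k := by
    linarith [Real.one_lt_cosh.mpr hβ.ne', Real.cos_le_one k]
  have hinv : exp β * r = 1 := by rw [← Real.exp_add, add_neg_cancel, Real.exp_zero]
  rw [sosFourier, hterm, (hasSum_pow_natAbs_mul_cos (Real.exp_pos (-β)).le hr1 k).tsum_eq,
    div_eq_div_iff hD.ne' hk.ne', Real.sinh_eq, Real.cosh_eq]
  linear_combination (cos k - r) * hinv

theorem mul_sosFourier_gt_sosFourier_zero_iff {β : ℝ} (hβ : 0 < β) (d k : ℝ) :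
    d * sosFourier β k > sosFourier β 0 ↔ cosh β - cos k < d * (cosh β - 1) := by
  have hcosh : 1 < cosh β := Real.one_lt_cosh.mpr hβ.ne'
  have hk : 0 < cosh β - cos k := by linarith [Real.cos_le_one k]
  rw [sosFourier_eq hβ, sosFourier_eq hβ, Real.cos_zero, gt_iff_lt, mul_div_assoc',
    div_lt_div_iff₀ (by linarith) hk, mul_comm d, mul_assoc, mul_lt_mul_iff_right₀
      (Real.sinh_pos_iff.mpr hβ)]

theorem forall_mul_sosFourier_gt_sosFourier_zero_iff {β : ℝ} (hβ : 0 < β) {d : ℝ}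
    (hd : 1 < d) :
    (∀ k ∈ Set.Icc 0 Real.pi, d * sosFourier β k > sosFourier β 0) ↔
      cosh β > (d + 1) / (d - 1) := by
  simp only [mul_sosFourier_gt_sosFourier_zero_iff hβ]
  rw [gt_iff_lt, div_lt_iff₀ (sub_pos.mpr hd)]
  constructor
  · intro h
    have hπ := h Real.pi ⟨Real.pi_pos.le, le_rfl⟩
    rw [Real.cos_pi] at hπ
    linarith
  · intro h k _
    linarith [Real.neg_one_le_cos k]

theorem Real.arcosh_lt_iff_lt_cosh {x y : ℝ} (hx : 0 < x) (hy : 0 ≤ y) :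
    Real.arcosh x < y ↔ x < cosh y := by
  conv_lhs => rw [← Real.arcosh_cosh hy]
  exact Real.arcosh_lt_arcosh hx (Real.cosh_pos y)

theorem stmt17 (d : ℕ) (hd : 2 ≤ d) (β : ℝ) (hβ : 0 < β) :
    ((∀ k ∈ Set.Icc (0 : ℝ) Real.pi, (d : ℝ) * sosFourier β k > sosFourier β 0) ↔
      Real.cosh β > ((d : ℝ) + 1) / ((d : ℝ) - 1)) ∧
    ((∀ k ∈ Set.Icc (0 : ℝ) Real.pi, (d : ℝ) * sosFourier β k > sosFourier β 0) ↔
      β > arcosh (((d : ℝ) + 1) / ((d : ℝ) - 1))) := by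
  have hd1 : (1 : ℝ) < d := by exact_mod_cast hd
  have hcriterion := forall_mul_sosFourier_gt_sosFourier_zero_iff hβ hd1
  have hpos : (0 : ℝ) < (d + 1) / (d - 1) := div_pos (by linarith) (by linarith)
  exact ⟨hcriterion, hcriterion.trans (Real.arcosh_lt_iff_lt_cosh hpos hβ.le).symm⟩
end

section
/- Let d ≥ 2 be an integer and a > 0 with a ≥ (6/π²)·(d−1)/(d+2), so that R := (π²/3)·(1 + 2/d) − (2/a)·(1 − 1/d) ≥ 0. Then for every k ∈ [0, π]: d·Q̂_{ISq,a}(k) > Q̂_{ISq,a}(0) holds if and only if k < π − √R, where Q̂_{ISq,a}(k) = ∑_{n∈ℤ} Q_{ISq,a}(n)·cos(n·k). -/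
/-!
On `[0, 2π]` the Fourier series `∑_{n ≥ 1} cos (n k) / n²` is the Bernoulli polynomial
`k² / 4 - π k / 2 + π² / 6`, so `Q̂(k) = 1 + a (k² / 2 - π k + π² / 3)` is a quadratic in `k`.
Completing the square gives `d Q̂(k) - Q̂(0) = (d a / 2) ((π - k)² - R)` with
`R = π² / 3 (1 + 2 / d) - 2 / a (1 - 1 / d)`, and the lower bound on `a` is exactly `R ≥ 0`;
hence for `k ≤ π` the inequality reads `√R < π - k`.
-/

/-- Fourier transform of the inverse square transfer operator with parameter `a`:
`Q(0) = 1`, `Q(n) = a/n²` for `n ≠ 0`. -/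
noncomputable def isqFourier (a k : ℝ) : ℝ :=
  1 + ∑' n : {n : ℤ // n ≠ 0}, a / ((n : ℤ) : ℝ) ^ 2 * Real.cos ((n : ℤ) * k)

open Real Set

lemma hasSum_cos_mul_div_sq {k : ℝ} (hk : k ∈ Icc 0 (2 * π)) :
    HasSum (fun n : ℕ => cos (n * k) / (n : ℝ) ^ 2) (k ^ 2 / 4 - π * k / 2 + π ^ 2 / 6) := by
  have hx : k / (2 * π) ∈ Icc (0 : ℝ) 1 :=
    ⟨div_nonneg hk.1 (by positivity), (div_le_one (by positivity)).mpr hk.2⟩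
  convert hasSum_one_div_nat_pow_mul_cos one_ne_zero hx using 1
  · ext n
    rw [show 2 * π * n * (k / (2 * π)) = n * k by field_simp]
    ring
  · rw [← bernoulliFun, mul_one, bernoulliFun_two, Nat.factorial_two]
    field_simp
    ring

lemma hasSum_int_cos_mul_div_sq {k : ℝ} (hk : k ∈ Icc 0 (2 * π)) :
    HasSum (fun n : ℤ => cos (n * k) / (n : ℝ) ^ 2) (k ^ 2 / 2 - π * k + π ^ 2 / 3) := by
  have h := hasSum_cos_mul_div_sq hk
  have hneg : HasSum (fun n : ℕ => cos (((-n : ℤ) : ℝ) * k) / ((-n : ℤ) : ℝ) ^ 2)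
      (k ^ 2 / 4 - π * k / 2 + π ^ 2 / 6) := by
    simpa only [Int.cast_neg, Int.cast_natCast, neg_mul, cos_neg, neg_sq] using h
  -- the `n = 0` term vanishes because `x / 0 = 0`
  have hsum := HasSum.of_nat_of_neg (f := fun n : ℤ => cos (n * k) / (n : ℝ) ^ 2)
    (by simpa only [Int.cast_natCast] using h) hneg
  rw [Int.cast_zero, zero_pow two_ne_zero, div_zero, sub_zero] at hsum
  convert hsum using 1
  · rfl
  · ring

lemma isqFourier_eq {a k : ℝ} (hk : k ∈ Icc 0 (2 * π)) :
    isqFourier a k = 1 + a * (k ^ 2 / 2 - π * k + π ^ 2 / 3) := by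
  have h : HasSum (fun n : ℤ => a / (n : ℝ) ^ 2 * cos (n * k))
      (a * (k ^ 2 / 2 - π * k + π ^ 2 / 3)) := by
    simpa only [mul_div_assoc', div_mul_eq_mul_div] using (hasSum_int_cos_mul_div_sq hk).mul_left a
  have hsupp : Function.support (fun n : ℤ => a / (n : ℝ) ^ 2 * cos (n * k)) ⊆ {n | n ≠ 0} :=
    fun n hn h0 => hn (by simp [h0])
  rw [isqFourier, ← h.tsum_eq, ← tsum_subtype_eq_of_support_subset hsupp]
  rfl

noncomputable def isqThreshold (d a : ℝ) : ℝ :=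
  π ^ 2 / 3 * (1 + 2 / d) - 2 / a * (1 - 1 / d)

lemma isqThreshold_nonneg {d a : ℝ} (hd : 0 < d) (ha : 0 < a)
    (ha' : 6 / π ^ 2 * ((d - 1) / (d + 2)) ≤ a) : 0 ≤ isqThreshold d a := by
  rw [div_mul_div_comm, div_le_iff₀ (by positivity)] at ha'
  rw [isqThreshold, sub_nonneg, div_mul_eq_mul_div, div_le_iff₀ ha]
  field_simp
  nlinarith

lemma mul_isqFourier_sub_isqFourier_zero {d a k : ℝ} (hd : d ≠ 0) (ha : a ≠ 0)
    (hk : k ∈ Icc 0 (2 * π)) :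
    d * isqFourier a k - isqFourier a 0 = d * a / 2 * ((π - k) ^ 2 - isqThreshold d a) := by
  rw [isqFourier_eq hk, isqFourier_eq ⟨le_rfl, by positivity⟩, isqThreshold]
  field_simp
  ring

lemma mul_isqFourier_gt_isqFourier_zero_iff {d a k : ℝ} (hd : 0 < d) (ha : 0 < a)
    (hR : 0 ≤ isqThreshold d a) (hk : k ∈ Icc 0 π) :
    d * isqFourier a k > isqFourier a 0 ↔ k < π - √(isqThreshold d a) := by
  have hk' : k ∈ Icc 0 (2 * π) := ⟨hk.1, hk.2.trans (by linarith [pi_pos])⟩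
  rw [gt_iff_lt, ← sub_pos, mul_isqFourier_sub_isqFourier_zero hd.ne' ha.ne' hk',
    mul_pos_iff_of_pos_left (by positivity), sub_pos, ← sqrt_lt hR (sub_nonneg.2 hk.2),
    lt_sub_comm]

theorem stmt19 (d : ℕ) (hd : 2 ≤ d) (a : ℝ) (ha : 0 < a)
    (ha' : 6 / Real.pi ^ 2 * (((d : ℝ) - 1) / ((d : ℝ) + 2)) ≤ a) :
    0 ≤ Real.pi ^ 2 / 3 * (1 + 2 / (d : ℝ)) - 2 / a * (1 - 1 / (d : ℝ)) ∧
    ∀ k ∈ Set.Icc (0 : ℝ) Real.pi,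
      ((d : ℝ) * isqFourier a k > isqFourier a 0 ↔
        k < Real.pi - Real.sqrt
          (Real.pi ^ 2 / 3 * (1 + 2 / (d : ℝ)) - 2 / a * (1 - 1 / (d : ℝ)))) := by
  have hd0 : (0 : ℝ) < d := by exact_mod_cast zero_lt_two.trans_le hd
  have hR := isqThreshold_nonneg hd0 ha ha'
  exact ⟨hR, fun k hk => mul_isqFourier_gt_isqFourier_zero_iff hd0 ha hR hk⟩
end
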